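/- arXiv:2404.08536 — 4 statements merged into one kernel-verified Lean document; each statement's English description precedes it below -/
import Mathlib

section
/- Let g ≥ 2 be an integer. For any integers k, k' ∈ ℤ, the distance d_g(⌊k/g⌋, ⌊k'/g⌋) is at most d_g(k, k'), where d_g is the word metric associated to S_g = {±g^n : n ∈ ℕ}. In other words, the map k ↦ ⌊k/g⌋ is 1-Lipschitz with respect to d_g. -/
/-- The generating set `S_g = {± g^k : k ∈ ℕ}` in `ℤ`. -/
def Sg (g : ℤ) : Set ℤ := {x | ∃ n : ℕ, x = g ^ n ∨ x = -g ^ n}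

/-- The word length of `k` with respect to `S_g`. -/
noncomputable def wlen (g : ℤ) (k : ℤ) : ℕ :=
  sInf {m | ∃ l : List ℤ, (∀ x ∈ l, x ∈ Sg g) ∧ l.length = m ∧ l.sum = k}

/-- The word metric `d_g(m,n) = ℓ_g(m - n)`. -/
noncomputable def dg (g : ℤ) (m n : ℤ) : ℕ := wlen g (m - n)


/-
Split a shortest word for `k - k'` into its letters `±1`, with sum `s`, and its letters
`±g^(n+1) = g · (±g^n)`, with sum `g T`. Dropping one factor `g` turns the second part into a
word for `T` of the same length, so `ℓ_g(T) + |s| ≤ ℓ_g(k - k')`. Since `k = k' + s + g T`,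
`⌊k/g⌋ - ⌊k'/g⌋ = T + (⌊(k'+s)/g⌋ - ⌊k'/g⌋)`, and the second summand has absolute value at
most `|s|`, so it costs at most `|s|` letters `±1`.
-/

theorem Int.natAbs_ediv_sub_ediv_le {g : ℤ} (hg : 0 < g) (a b : ℤ) :
    (a / g - b / g).natAbs ≤ (a - b).natAbs := by
  suffices h : ∀ a b : ℤ, b ≤ a → a / g - b / g ≤ a - b by
    rcases le_total b a with hba | hab
    · have := Int.ediv_le_ediv hg hba
      have := h a b hba
      omega
    · have := Int.ediv_le_ediv hg hab
      have := h b a hab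
      omega
  intro a b hba
  have ha := Int.ediv_mul_le a hg.ne'
  have hb := Int.lt_ediv_add_one_mul_self b hg
  have : g * (a / g - b / g) < g * (a - b + 1) := by nlinarith
  have := lt_of_mul_lt_mul_left this hg.le
  omega

section WordLength

variable {g : ℤ}

theorem wlen_le_length {l : List ℤ} (hl : ∀ x ∈ l, x ∈ Sg g) : wlen g l.sum ≤ l.length :=
  Nat.sInf_le ⟨l, hl, rfl, rfl⟩

theorem exists_word_length_natAbs (g k : ℤ) :
    ∃ l : List ℤ, (∀ x ∈ l, x ∈ Sg g) ∧ l.length = k.natAbs ∧ l.sum = k := by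
  refine ⟨List.replicate k.natAbs k.sign, fun x hx => ?_, List.length_replicate,
    by simp [List.sum_replicate, mul_comm _ k.sign, Int.sign_mul_abs]⟩
  obtain ⟨hk, rfl⟩ := List.mem_replicate.mp hx
  refine ⟨0, ?_⟩
  rcases Int.sign_trichotomy k with h | h | h <;> simp_all

theorem wlen_le_natAbs (g k : ℤ) : wlen g k ≤ k.natAbs := by
  obtain ⟨l, hl, hlen, rfl⟩ := exists_word_length_natAbs g k
  exact hlen ▸ wlen_le_length hl

theorem exists_word_of_length_wlen (g k : ℤ) :
    ∃ l : List ℤ, (∀ x ∈ l, x ∈ Sg g) ∧ l.length = wlen g k ∧ l.sum = k :=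
  Nat.sInf_mem (s := {m | ∃ l : List ℤ, (∀ x ∈ l, x ∈ Sg g) ∧ l.length = m ∧ l.sum = k})
    ⟨_, exists_word_length_natAbs g k⟩

theorem wlen_le_one {x : ℤ} (hx : x ∈ Sg g) : wlen g x ≤ 1 := by
  simpa using wlen_le_length (l := [x]) (by simpa using hx)

theorem wlen_add_le (a b : ℤ) : wlen g (a + b) ≤ wlen g a + wlen g b := by
  obtain ⟨la, hla, hlena, rfl⟩ := exists_word_of_length_wlen g a
  obtain ⟨lb, hlb, hlenb, rfl⟩ := exists_word_of_length_wlen g b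
  rw [← hlena, ← hlenb, ← List.sum_append, ← List.length_append]
  exact wlen_le_length fun x hx => (List.mem_append.mp hx).elim (hla x) (hlb x)

theorem exists_eq_mul_add_of_word {l : List ℤ} (hl : ∀ x ∈ l, x ∈ Sg g) :
    ∃ T s : ℤ, l.sum = g * T + s ∧ wlen g T + s.natAbs ≤ l.length := by
  induction l with
  | nil => exact ⟨0, 0, by simp, by simpa using wlen_le_length (g := g) (l := []) (by simp)⟩
  | cons x l ih =>
    obtain ⟨T, s, hsum, hlen⟩ := ih fun y hy => hl y (List.mem_cons_of_mem _ hy)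
    obtain ⟨n, hx⟩ := hl x List.mem_cons_self
    rw [List.sum_cons, List.length_cons, hsum]
    cases n with
    | zero =>
      refine ⟨T, s + x, by ring, ?_⟩
      have : (s + x).natAbs ≤ s.natAbs + 1 := by rcases hx with rfl | rfl <;> simp <;> omega
      omega
    | succ n =>
      obtain ⟨y, hy, rfl⟩ : ∃ y ∈ Sg g, x = g * y := by
        rcases hx with rfl | rfl
        · exact ⟨g ^ n, ⟨n, Or.inl rfl⟩, by ring⟩
        · exact ⟨-g ^ n, ⟨n, Or.inr rfl⟩, by ring⟩
      refine ⟨y + T, s, by ring, ?_⟩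
      have := (wlen_add_le y T).trans (Nat.add_le_add_right (wlen_le_one hy) _)
      omega

theorem exists_eq_mul_add_wlen_le (g k : ℤ) :
    ∃ T s : ℤ, k = g * T + s ∧ wlen g T + s.natAbs ≤ wlen g k := by
  obtain ⟨l, hl, hlen, rfl⟩ := exists_word_of_length_wlen g k
  rw [← hlen]
  exact exists_eq_mul_add_of_word hl

end WordLength

theorem stmt_2 (g : ℤ) (hg : 2 ≤ g) (k k' : ℤ) :
    dg g (Int.fdiv k g) (Int.fdiv k' g) ≤ dg g k k' := by
  have hg0 : 0 < g := by omega
  obtain ⟨T, s, hks, hlen⟩ := exists_eq_mul_add_wlen_le g (k - k')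
  have hk : k / g = T + (k' + s) / g := by
    rw [show k = k' + s + g * T by omega, Int.add_mul_ediv_left _ _ hg0.ne', add_comm]
  unfold dg
  rw [Int.fdiv_eq_ediv_of_nonneg _ hg0.le, Int.fdiv_eq_ediv_of_nonneg _ hg0.le, hk, add_sub_assoc]
  calc wlen g (T + ((k' + s) / g - k' / g))
      ≤ wlen g T + wlen g ((k' + s) / g - k' / g) := wlen_add_le _ _
    _ ≤ wlen g T + s.natAbs := by
        gcongr
        refine (wlen_le_natAbs g _).trans ?_
        simpa using Int.natAbs_ediv_sub_ediv_le hg0 (k' + s) k'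
    _ ≤ wlen g (k - k') := hlen
end

section
/- Let g ≥ 2 and define B_n = (n + S_g) \ ⋃_{i=0}^{n−1} (i + S_g) for n ∈ ℕ. Then the sets B_n are pairwise disjoint and each B_n is infinite. -/
/-- `B n = (n + S_g) \ ⋃_{i < n} (i + S_g)`. -/
def Bset (g : ℤ) (n : ℕ) : Set ℤ :=
  ((fun s => (n : ℤ) + s) '' Sg g) \ ⋃ i ∈ Finset.range n, ((fun s => (i : ℤ) + s) '' Sg g)

/-! The sets `B_n` are Mathlib's `disjointed` sequence of the translates `n + S_g`. For
infinitude: once `n < g^a`, the point `n + g^a` lies in no earlier translate `i + S_g`, because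
subtracting `i < n` leaves a number strictly between `g^a` and `2 g^a ≤ g^(a+1)`; these points
are unbounded above. -/

theorem Bset_eq_disjointed (g : ℤ) (n : ℕ) :
    Bset g n = disjointed (fun i : ℕ => (fun s => (i : ℤ) + s) '' Sg g) n := by
  rw [disjointed_apply, Nat.Iio_eq_range, Finset.sup_set_eq_biUnion]
  rfl

theorem pow_mem_Sg (g : ℤ) (k : ℕ) : g ^ k ∈ Sg g := ⟨k, Or.inl rfl⟩

theorem not_mem_Sg_of_pow_lt_of_lt_pow {g x : ℤ} (hg : 1 < g) {a : ℕ}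
    (hlo : g ^ a < x) (hhi : x < g ^ (a + 1)) : x ∉ Sg g := by
  rintro ⟨m, rfl | rfl⟩
  · have ham : a < m := (pow_lt_pow_iff_right₀ hg).mp hlo
    have hma : m < a + 1 := (pow_lt_pow_iff_right₀ hg).mp hhi
    omega
  · have := pow_pos (zero_lt_one.trans hg) a
    have := pow_pos (zero_lt_one.trans hg) m
    linarith

theorem add_pow_mem_Bset {g : ℤ} (hg : 2 ≤ g) {n a : ℕ} (ha : (n : ℤ) < g ^ a) :
    (n : ℤ) + g ^ a ∈ Bset g n := by
  refine ⟨⟨g ^ a, pow_mem_Sg g a, rfl⟩, ?_⟩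
  simp only [Set.mem_iUnion, Finset.mem_range, Set.mem_image, not_exists, not_and]
  intro i hi s hs hsum
  have hi' : (i : ℤ) < n := by exact_mod_cast hi
  refine not_mem_Sg_of_pow_lt_of_lt_pow (by omega) (a := a) ?_ ?_ hs
  · omega
  · have : g * g ^ a = g ^ (a + 1) := by ring
    nlinarith

theorem Bset_not_bddAbove {g : ℤ} (hg : 2 ≤ g) (n : ℕ) : ¬BddAbove (Bset g n) := by
  rintro ⟨b, hb⟩
  obtain ⟨a, ha⟩ := pow_unbounded_of_one_lt (max b n) (by omega : (1 : ℤ) < g)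
  have := hb (add_pow_mem_Bset hg (lt_of_le_of_lt (le_max_right b n) ha))
  omega

theorem stmt_10 (g : ℤ) (hg : 2 ≤ g) :
    (Pairwise fun n m => Disjoint (Bset g n) (Bset g m)) ∧ ∀ n, (Bset g n).Infinite := by
  refine ⟨fun n m hnm => ?_, fun n => Set.infinite_of_not_bddAbove (Bset_not_bddAbove hg n)⟩
  simpa only [Bset_eq_disjointed] using disjoint_disjointed _ hnm
end

section
/- Let G and H be countable metric spaces, and suppose there are partitions G = ⊔_i B_i and H = ⊔_i C_i into infinite sets of uniformly bounded diameter. Then every coarse equivalence f: G → H is within bounded distance of a bijection g: G → H. -/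
/-- A map between metric spaces is controlled if it maps uniformly bounded pairs to
uniformly bounded pairs. -/
def Controlled {G H : Type*} [MetricSpace G] [MetricSpace H] (f : G → H) : Prop :=
  ∀ R : ℝ, ∃ S : ℝ, ∀ x x' : G, dist x x' ≤ R → dist (f x) (f x') ≤ S


/-- A finite partial matching for a relation `N`. -/
structure PMatch {α β : Type*} (N : α → β → Prop) where
  s : Set (α × β)
  fin : s.Finite
  inj1 : ∀ p ∈ s, ∀ q ∈ s, p.1 = q.1 → p = q
  inj2 : ∀ p ∈ s, ∀ q ∈ s, p.2 = q.2 → p = q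
  rel : ∀ p ∈ s, N p.1 p.2

lemma PMatch.extend_left {α β : Type*} {N : α → β → Prop}
    (hG : ∀ x, {y | N x y}.Infinite) (m : PMatch N) (x : α) :
    ∃ m' : PMatch N, m.s ⊆ m'.s ∧ x ∈ Prod.fst '' m'.s := by
  by_cases hx : x ∈ Prod.fst '' m.s
  · exact ⟨m, subset_rfl, hx⟩
  · obtain ⟨y, hy⟩ := ((hG x).diff (m.fin.image Prod.snd)).nonempty
    refine ⟨⟨insert (x, y) m.s, m.fin.insert _, ?_, ?_, ?_⟩, Set.subset_insert _ _,
      ⟨(x, y), Set.mem_insert _ _, rfl⟩⟩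
    · rintro p (rfl | hp) q (rfl | hq) h
      · rfl
      · exact absurd ⟨q, hq, h.symm⟩ hx
      · exact absurd ⟨p, hp, h⟩ hx
      · exact m.inj1 p hp q hq h
    · rintro p (rfl | hp) q (rfl | hq) h
      · rfl
      · exact absurd ⟨q, hq, h.symm⟩ hy.2
      · exact absurd ⟨p, hp, h⟩ hy.2
      · exact m.inj2 p hp q hq h
    · rintro p (rfl | hp)
      · exact hy.1
      · exact m.rel p hp

lemma PMatch.extend_right {α β : Type*} {N : α → β → Prop}
    (hH : ∀ y, {x | N x y}.Infinite) (m : PMatch N) (y : β) :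
    ∃ m' : PMatch N, m.s ⊆ m'.s ∧ y ∈ Prod.snd '' m'.s := by
  by_cases hy : y ∈ Prod.snd '' m.s
  · exact ⟨m, subset_rfl, hy⟩
  · obtain ⟨x, hx⟩ := ((hH y).diff (m.fin.image Prod.fst)).nonempty
    refine ⟨⟨insert (x, y) m.s, m.fin.insert _, ?_, ?_, ?_⟩, Set.subset_insert _ _,
      ⟨(x, y), Set.mem_insert _ _, rfl⟩⟩
    · rintro p (rfl | hp) q (rfl | hq) h
      · rfl
      · exact absurd ⟨q, hq, h.symm⟩ hx.2
      · exact absurd ⟨p, hp, h⟩ hx.2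
      · exact m.inj1 p hp q hq h
    · rintro p (rfl | hp) q (rfl | hq) h
      · rfl
      · exact absurd ⟨q, hq, h.symm⟩ hy
      · exact absurd ⟨p, hp, h⟩ hy
      · exact m.inj2 p hp q hq h
    · rintro p (rfl | hp)
      · exact hx.1
      · exact m.rel p hp

lemma PMatch.extend_both {α β : Type*} {N : α → β → Prop}
    (hG : ∀ x, {y | N x y}.Infinite) (hH : ∀ y, {x | N x y}.Infinite)
    (m : PMatch N) (x : α) (y : β) :
    ∃ m' : PMatch N, m.s ⊆ m'.s ∧ x ∈ Prod.fst '' m'.s ∧ y ∈ Prod.snd '' m'.s := by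
  obtain ⟨m₁, h₁, hx₁⟩ := m.extend_left hG x
  obtain ⟨m₂, h₂, hy₂⟩ := m₁.extend_right hH y
  refine ⟨m₂, h₁.trans h₂, ?_, hy₂⟩
  obtain ⟨p, hp, hpx⟩ := hx₁
  exact ⟨p, h₂ hp, hpx⟩

theorem exists_bijective_of_rel {α β : Type*} [Countable α] [Countable β]
    (N : α → β → Prop)
    (hG : ∀ x, {y | N x y}.Infinite)
    (hH : ∀ y, {x | N x y}.Infinite) :
    ∃ h : α → β, Function.Bijective h ∧ ∀ x, N x (h x) := by
  cases isEmpty_or_nonempty α with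
  | inl hα =>
    have hβ : IsEmpty β := by
      by_contra hne
      obtain ⟨y⟩ := not_isEmpty_iff.mp hne
      exact (hH y).nonempty.elim fun x _ => hα.false x
    exact ⟨fun x => isEmptyElim x, ⟨fun x => isEmptyElim x, fun y => isEmptyElim y⟩,
      fun x => isEmptyElim x⟩
  | inr hα =>
    have hβ : Nonempty β := (hG (Classical.arbitrary α)).nonempty.elim fun y _ => ⟨y⟩
    obtain ⟨eG, heG⟩ := exists_surjective_nat α
    obtain ⟨eH, heH⟩ := exists_surjective_nat β
    -- build the increasing chain of partial matchings
    let F : ℕ → PMatch N := fun n =>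
      Nat.rec ⟨∅, Set.finite_empty, by simp, by simp, by simp⟩
        (fun n m => (m.extend_both hG hH (eG n) (eH n)).choose) n
    have hstep : ∀ n, (F n).s ⊆ (F (n + 1)).s ∧
        eG n ∈ Prod.fst '' (F (n + 1)).s ∧ eH n ∈ Prod.snd '' (F (n + 1)).s :=
      fun n => ((F n).extend_both hG hH (eG n) (eH n)).choose_spec
    have hmono : ∀ {m n : ℕ}, m ≤ n → (F m).s ⊆ (F n).s := by
      intro m n h
      induction h with
      | refl => exact subset_rfl
      | step h ih => exact ih.trans (hstep _).1
    set U : Set (α × β) := ⋃ n, (F n).s with hU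
    have hUmem : ∀ p ∈ U, ∀ q ∈ U, ∃ n, p ∈ (F n).s ∧ q ∈ (F n).s := by
      rintro p hp q hq
      obtain ⟨_, ⟨n, rfl⟩, hpn⟩ := hp
      obtain ⟨_, ⟨k, rfl⟩, hqk⟩ := hq
      exact ⟨max n k, hmono (le_max_left n k) hpn, hmono (le_max_right n k) hqk⟩
    have hUinj1 : ∀ p ∈ U, ∀ q ∈ U, p.1 = q.1 → p = q := by
      intro p hp q hq h
      obtain ⟨n, hpn, hqn⟩ := hUmem p hp q hq
      exact (F n).inj1 p hpn q hqn h
    have hUinj2 : ∀ p ∈ U, ∀ q ∈ U, p.2 = q.2 → p = q := by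
      intro p hp q hq h
      obtain ⟨n, hpn, hqn⟩ := hUmem p hp q hq
      exact (F n).inj2 p hpn q hqn h
    have hex : ∀ x : α, ∃ y, (x, y) ∈ U := by
      intro x
      obtain ⟨k, rfl⟩ := heG x
      obtain ⟨p, hp, hpx⟩ := (hstep k).2.1
      exact ⟨p.2, by rw [hU]; exact Set.mem_iUnion.mpr ⟨k + 1, by rwa [← hpx]⟩⟩
    choose h hh using hex
    have hrel : ∀ x, N x (h x) := by
      intro x
      obtain ⟨_, ⟨n, rfl⟩, hn⟩ := hh x
      exact (F n).rel _ hn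
    refine ⟨h, ⟨?_, ?_⟩, hrel⟩
    · intro a b hab
      have := hUinj2 (a, h a) (hh a) (b, h b) (hh b) (by simpa using hab)
      exact congrArg Prod.fst this
    · intro y
      obtain ⟨k, rfl⟩ := heH y
      obtain ⟨p, hp, hpy⟩ := (hstep k).2.2
      have hpU : p ∈ U := Set.mem_iUnion.mpr ⟨k + 1, hp⟩
      refine ⟨p.1, ?_⟩
      have := hUinj1 (p.1, h p.1) (hh p.1) p hpU rfl
      rw [← hpy, ← this]
theorem stmt_11 {G H : Type*} [MetricSpace G] [MetricSpace H]
    [Countable G] [Countable H] {ι : Type*}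
    (B : ι → Set G) (C : ι → Set H)
    (hBdisj : Pairwise fun i j => Disjoint (B i) (B j))
    (hCdisj : Pairwise fun i j => Disjoint (C i) (C j))
    (hBcov : ⋃ i, B i = Set.univ) (hCcov : ⋃ i, C i = Set.univ)
    (hBinf : ∀ i, (B i).Infinite) (hCinf : ∀ i, (C i).Infinite)
    (D : ℝ)
    (hBdiam : ∀ i, ∀ x ∈ B i, ∀ y ∈ B i, dist x y ≤ D)
    (hCdiam : ∀ i, ∀ x ∈ C i, ∀ y ∈ C i, dist x y ≤ D)
    (f : G → H) (hf : Controlled f)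
    (f' : H → G) (hf' : Controlled f')
    (K : ℝ) (hclose₁ : ∀ x : G, dist (f' (f x)) x ≤ K)
    (hclose₂ : ∀ y : H, dist (f (f' y)) y ≤ K) :
    ∃ h : G → H, Function.Bijective h ∧ ∃ M : ℝ, ∀ x : G, dist (f x) (h x) ≤ M := by
  obtain ⟨S, hS⟩ := hf D
  set L : ℝ := max D (S + K) with hL
  have hG : ∀ x : G, {y : H | dist (f x) y ≤ L}.Infinite := by
    intro x
    have : f x ∈ ⋃ i, C i := by rw [hCcov]; trivial
    obtain ⟨_, ⟨c, rfl⟩, hc⟩ := this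
    refine (hCinf c).mono ?_
    intro y hy
    exact le_trans (hCdiam c (f x) hc y hy) (le_max_left _ _)
  have hH : ∀ y : H, {x : G | dist (f x) y ≤ L}.Infinite := by
    intro y
    have : f' y ∈ ⋃ i, B i := by rw [hBcov]; trivial
    obtain ⟨_, ⟨b, rfl⟩, hb⟩ := this
    refine (hBinf b).mono ?_
    intro x hx
    have h1 : dist (f x) (f (f' y)) ≤ S := hS x (f' y) (hBdiam b x hx (f' y) hb)
    calc dist (f x) y ≤ dist (f x) (f (f' y)) + dist (f (f' y)) y := dist_triangle _ _ _
      _ ≤ S + K := add_le_add h1 (hclose₂ y)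
      _ ≤ L := le_max_right _ _
  obtain ⟨h, hbij, hrel⟩ := exists_bijective_of_rel (fun x y => dist (f x) y ≤ L) hG hH
  exact ⟨h, hbij, L, hrel⟩
end

section
/- Let g ≥ 2 be an integer. For every integer k, there exists a representation k = Σ_{i=0}^{N} ε_i g^i with ε_i ∈ {0, ±1, …, ±⌊g/2⌋} such that Σ_i |ε_i| = ℓ_g(k), where ℓ_g(k) is the word length of k with respect to S_g = {±g^n : n ∈ ℕ}. In other words, the minimal number of signed powers of g summing to k can always be achieved using coefficients of absolute value at most ⌊g/2⌋ for each power. -/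
/-!
An optimal writing of `k` as a sum of `±g^n` splits as `k = a + g * m`, where `a` collects the
terms `±1`, with `|a| + ℓ_g(m) ≤ ℓ_g(k)`. Replacing `a` by a balanced residue `r ≡ a [ZMOD g]` and
carrying the quotient `q` into `m` costs nothing, because `|r| + |q| ≤ |a|`. Hence
`k = r + g * k'` with `|r| ≤ ⌊g/2⌋` and `|r| + ℓ_g(k') ≤ ℓ_g(k)`. For `k ≠ 0` this forces
`|k'| < |k|` (`k' = k` would give `r = 0` and `k = g * k`), so induction on `|k|` gives a
balanced expansion of weight at most `ℓ_g(k)`. Conversely every expansion `Σ ε_i g^i` is a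
writing of weight `Σ |ε_i|`.
-/

section WordLength

variable {g : ℤ}

theorem wlen_zero : wlen g 0 = 0 :=
  Nat.le_zero.1 (wlen_le_length (l := []) (by simp))

theorem exists_list_sum_eq_mul_pow (n : ℤ) (j : ℕ) :
    ∃ l : List ℤ, (∀ x ∈ l, x ∈ Sg g) ∧ l.length = n.natAbs ∧ l.sum = n * g ^ j := by
  refine ⟨List.replicate n.natAbs (n.sign * g ^ j), fun x hx => ⟨j, ?_⟩, by simp, ?_⟩
  · obtain ⟨hn, rfl⟩ := List.mem_replicate.1 hx
    rcases lt_or_gt_of_ne (Int.natAbs_ne_zero.1 hn) with hneg | hpos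
    · simp [Int.sign_eq_neg_one_of_neg hneg]
    · simp [Int.sign_eq_one_of_pos hpos]
  · rw [List.sum_replicate, nsmul_eq_mul, ← mul_assoc, mul_comm _ n.sign, Int.sign_mul_natAbs]

theorem wlen_mul_pow_le (n : ℤ) (j : ℕ) : wlen g (n * g ^ j) ≤ n.natAbs := by
  obtain ⟨l, hl, hlen, hsum⟩ := exists_list_sum_eq_mul_pow (g := g) n j
  exact hsum ▸ hlen ▸ wlen_le_length hl

theorem exists_list_length_eq_wlen (k : ℤ) :
    ∃ l : List ℤ, (∀ x ∈ l, x ∈ Sg g) ∧ l.length = wlen g k ∧ l.sum = k := by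
  refine Nat.sInf_mem (s := {m | ∃ l : List ℤ, (∀ x ∈ l, x ∈ Sg g) ∧ l.length = m ∧ l.sum = k}) ?_
  obtain ⟨l, hl, -, hsum⟩ := exists_list_sum_eq_mul_pow (g := g) k 0
  exact ⟨_, l, hl, rfl, by simpa using hsum⟩

theorem wlen_sum_mul_pow_le (ε : ℕ → ℤ) (N : ℕ) :
    wlen g (∑ i ∈ Finset.range N, ε i * g ^ i) ≤ ∑ i ∈ Finset.range N, (ε i).natAbs := by
  induction N with
  | zero => simp [wlen_zero]
  | succ N ih =>
    rw [Finset.sum_range_succ, Finset.sum_range_succ]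
    exact (wlen_add_le _ _).trans (add_le_add ih (wlen_mul_pow_le _ _))

theorem exists_sum_eq_add_mul {l : List ℤ} (hl : ∀ x ∈ l, x ∈ Sg g) :
    ∃ a m, l.sum = a + g * m ∧ a.natAbs + wlen g m ≤ l.length := by
  induction l with
  | nil => exact ⟨0, 0, by simp, by simp [wlen_zero]⟩
  | cons x l ih =>
    obtain ⟨a, m, hsum, hlen⟩ := ih fun y hy => hl y (List.mem_cons_of_mem x hy)
    obtain ⟨n, s, hs, rfl⟩ : ∃ (n : ℕ) (s : ℤ), s.natAbs = 1 ∧ x = s * g ^ n := by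
      obtain ⟨n, rfl | rfl⟩ := hl x List.mem_cons_self
      exacts [⟨n, 1, rfl, by ring⟩, ⟨n, -1, rfl, by ring⟩]
    rw [List.sum_cons, List.length_cons, hsum]
    cases n with
    | zero => exact ⟨s + a, m, by ring, by omega⟩
    | succ n =>
      refine ⟨a, s * g ^ n + m, by ring, ?_⟩
      have := (wlen_add_le (g := g) (s * g ^ n) m).trans
        (add_le_add_left (wlen_mul_pow_le s n) _)
      omega

theorem exists_eq_add_mul_wlen_le (k : ℤ) :
    ∃ a m, k = a + g * m ∧ a.natAbs + wlen g m ≤ wlen g k := by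
  obtain ⟨l, hl, hlen, rfl⟩ := exists_list_length_eq_wlen (g := g) k
  exact hlen ▸ exists_sum_eq_add_mul hl

theorem exists_balanced_carry_of_nonneg {a : ℤ} (hg : 0 < g) (ha : 0 ≤ a) :
    ∃ r q, a = r + g * q ∧ |r| ≤ g / 2 ∧ r.natAbs + q.natAbs ≤ a.natAbs := by
  have hdiv := Int.emod_add_mul_ediv a g
  have hr₀ := Int.emod_nonneg a hg.ne'
  have hr₁ := Int.emod_lt_of_pos a hg
  have hq₀ := Int.ediv_nonneg ha hg.le
  have hq := le_mul_of_one_le_left hq₀ hg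
  generalize a % g = r₀ at *
  generalize a / g = q at *
  by_cases hhalf : 2 * r₀ ≤ g
  · exact ⟨r₀, q, hdiv.symm, abs_le.2 ⟨by omega, by omega⟩, by omega⟩
  · exact ⟨r₀ - g, q + 1, by linarith, abs_le.2 ⟨by omega, by omega⟩, by omega⟩

/-- For `a < 0` the residue has to be taken in `[-g/2, g/2)` rather than `(-g/2, g/2]`, hence the
reflection. -/
theorem exists_balanced_carry (hg : 0 < g) (a : ℤ) :
    ∃ r q, a = r + g * q ∧ |r| ≤ g / 2 ∧ r.natAbs + q.natAbs ≤ a.natAbs := by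
  rcases le_total 0 a with ha | ha
  · exact exists_balanced_carry_of_nonneg hg ha
  · obtain ⟨r, q, h, hr, hw⟩ := exists_balanced_carry_of_nonneg hg (neg_nonneg.2 ha)
    exact ⟨-r, -q, by linarith, by rwa [abs_neg], by simpa using hw⟩

theorem exists_balanced_step (hg : 0 < g) (k : ℤ) :
    ∃ r k', k = r + g * k' ∧ |r| ≤ g / 2 ∧ r.natAbs + wlen g k' ≤ wlen g k := by
  obtain ⟨a, m, rfl, ham⟩ := exists_eq_add_mul_wlen_le (g := g) k
  obtain ⟨r, q, rfl, hr, hrq⟩ := exists_balanced_carry hg a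
  have hcarry : wlen g (q + m) ≤ q.natAbs + wlen g m := by
    simpa using (wlen_add_le (g := g) (q * g ^ 0) m).trans
      (add_le_add_left (wlen_mul_pow_le q 0) _)
  exact ⟨r, q + m, by ring, hr, by omega⟩

theorem natAbs_lt_natAbs_add_mul {r k : ℤ} (hg : 2 ≤ g) (hr : |r| ≤ g / 2)
    (hk : r + g * k ≠ k) : k.natAbs < (r + g * k).natAbs := by
  obtain ⟨hr₀, hr₁⟩ := abs_le.1 hr
  rcases lt_trichotomy k 0 with hneg | rfl | hpos
  · have : g * k ≤ k - g + 1 := by nlinarith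
    omega
  · omega
  · have : g + k - 1 ≤ g * k := by nlinarith
    omega

theorem exists_balanced_digits_le_wlen (hg : 2 ≤ g) (k : ℤ) :
    ∃ (N : ℕ) (ε : ℕ → ℤ), (∀ i, |ε i| ≤ g / 2) ∧
      ∑ i ∈ Finset.range (N + 1), ε i * g ^ i = k ∧
      ∑ i ∈ Finset.range (N + 1), (ε i).natAbs ≤ wlen g k := by
  induction hn : k.natAbs using Nat.strong_induction_on generalizing k with
  | _ n ih =>
  by_cases hk : k = 0
  · exact ⟨0, 0, fun _ => by rw [Pi.zero_apply, abs_zero]; omega, by simp [hk], by simp⟩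
  obtain ⟨r, k', rfl, hr, hw⟩ := exists_balanced_step (by omega : 0 < g) k
  have hk' : r + g * k' ≠ k' := by
    intro heq
    have hr0 : r = 0 := by rw [heq] at hw; omega
    subst hr0
    exact mul_ne_zero (by omega : g - 1 ≠ 0) (by rwa [heq] at hk) (by linarith)
  obtain ⟨N, δ, hδ, hsum, hweight⟩ := ih _ (hn ▸ natAbs_lt_natAbs_add_mul hg hr hk') k' rfl
  refine ⟨N + 1, fun | 0 => r | i + 1 => δ i, fun | 0 => hr | i + 1 => hδ i, ?_, ?_⟩
  · rw [Finset.sum_range_succ', ← hsum, Finset.mul_sum, add_comm, pow_zero, mul_one]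
    exact congrArg (r + ·) (Finset.sum_congr rfl fun i _ => by ring)
  · rw [Finset.sum_range_succ']
    dsimp only
    omega

end WordLength

/-- The word length of `k` is achieved by a representation `k = Σ ε_i g^i` with
`|ε_i| ≤ ⌊g/2⌋` and total weight `Σ |ε_i| = ℓ_g(k)`. -/
theorem stmt_18 (g : ℤ) (hg : 2 ≤ g) (k : ℤ) :
    ∃ (N : ℕ) (ε : ℕ → ℤ),
      (∀ i, |ε i| ≤ g / 2) ∧
      (∑ i ∈ Finset.range (N + 1), ε i * g ^ i) = k ∧
      (∑ i ∈ Finset.range (N + 1), (ε i).natAbs) = wlen g k := by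
  obtain ⟨N, ε, hε, hsum, hle⟩ := exists_balanced_digits_le_wlen hg k
  exact ⟨N, ε, hε, hsum, le_antisymm hle (hsum ▸ wlen_sum_mul_pow_le ε (N + 1))⟩
end
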